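/- arXiv:1507.05484 — 2 statements merged into one kernel-verified Lean document; each statement's English description precedes it below -/
import Mathlib

section
/- For every n ≥ 1 and every m ≥ 1, the number R_{n,m} of functions f : Fin n → Fin n with exactly m ascending runs satisfies (as an identity of integers) R_{n,m} = n · C(n−1, m−1) · Σ_{ℓ=0}^{m−1} (−1)^{m−1−ℓ} · C(m−1, ℓ) · (ℓ+1)^{n−1}, where C(a,b) denotes the binomial coefficient. -/
/-- The number of ascending runs of `f`: the number of elements `j` that are the
start of an ascending run, i.e. every preimage `i` of `j` satisfies `j ≤ i`. -/
def numRuns {n : ℕ} (f : Fin n → Fin n) : ℕ :=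
  (Finset.univ.filter (fun j : Fin n => ∀ i : Fin n, f i = j → j ≤ i)).card

/-- `R_{n,m}`: the number of functions on `Fin n` with exactly `m` ascending runs. -/
noncomputable def mappingRunCount (n m : ℕ) : ℕ :=
  Nat.card {f : Fin n → Fin n // numRuns f = m}

/-!
The `k`-th binomial moment `∑ f, C(numRuns f, k)` counts pairs `(S, f)` with `#S = k` and every
`j ∈ S` a run start of `f`, i.e. `f i ∉ {j ∈ S | i < j}` for all `i`; for fixed `S` there are
`∏ i, (n - #{j ∈ S | i < j})` such `f`. Splitting off the point `0` gives a two-term recursion for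
the sum of these products over `k`-subsets, which the Leibniz rule for the forward difference `Δ`
shows is also satisfied by `C(n, k) * Δᵏ[xⁿ](n - k)`. By the Gregory–Newton formula the latter is
`∑ j, C(j, k) * C(n, j) * Δʲ[xⁿ](0)`, and binomial moments determine a distribution, so
`R_{n,m} = C(n, m) * Δᵐ[xⁿ](0) = n * C(n - 1, m - 1) * Δᵐ⁻¹[xⁿ⁻¹](1)`.
-/

open Finset fwdDiff

section FwdDiff

variable {R : Type*} [CommRing R]

theorem fwdDiff_iter_succ_id_mul (f : R → R) (n : ℕ) (y : R) :
    (Δ_[1])^[n + 1] (fun x ↦ x * f x) y =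
      y * (Δ_[1])^[n + 1] f y + (n + 1) * (Δ_[1])^[n] f (y + 1) := by
  induction n generalizing f y with
  | zero => simp [fwdDiff]; ring
  | succ n ih =>
    have hΔ : Δ_[1] (fun x ↦ x * f x) = (fun x ↦ x * Δ_[1] f x) + fun x ↦ f (x + 1) := by
      ext x; simp only [fwdDiff, Pi.add_apply]; ring
    rw [Function.iterate_succ_apply, hΔ, fwdDiff_iter_add, Pi.add_apply, ih,
      fwdDiff_iter_comp_add, ← Function.iterate_succ_apply, ← Function.iterate_succ_apply]
    push_cast
    ring

theorem choose_mul_fwdDiff_iter_sub (f : R → R) (a k : ℕ) :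
    (a.choose k : R) * (Δ_[1])^[k] f (a - k) =
      ∑ j ∈ range (a + 1), (j.choose k : R) * (a.choose j * (Δ_[1])^[j] f 0) := by
  rcases lt_or_ge a k with hak | hka
  · rw [Nat.choose_eq_zero_of_lt hak, Nat.cast_zero, zero_mul, eq_comm]
    refine sum_eq_zero fun j hj ↦ ?_
    rw [Nat.choose_eq_zero_of_lt (by grind), Nat.cast_zero, zero_mul]
  obtain ⟨b, rfl⟩ := Nat.exists_eq_add_of_le hka
  have hnewton := shift_eq_sum_fwdDiff_iter 1 ((Δ_[1])^[k] f) b 0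
  simp only [nsmul_eq_mul, mul_one, zero_add, ← Function.iterate_add_apply] at hnewton
  rw [show ((k + b : ℕ) : R) - k = b by push_cast; ring, hnewton, mul_sum,
    show k + b + 1 = k + (b + 1) by ring, sum_range_add _ k (b + 1)]
  rw [sum_eq_zero (s := range k) fun j hj ↦ by
    rw [Nat.choose_eq_zero_of_lt (mem_range.1 hj), Nat.cast_zero, zero_mul], zero_add]
  refine sum_congr rfl fun i _ ↦ ?_
  have hchoose :
      ((k + b).choose (k + i) : R) * (k + i).choose k = (k + b).choose k * b.choose i := by
    have := Nat.choose_mul (n := k + b) (Nat.le_add_right k i)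
    rw [Nat.add_sub_cancel_left, Nat.add_sub_cancel_left] at this
    exact_mod_cast congrArg (Nat.cast : ℕ → R) this
  rw [add_comm i k]
  linear_combination -((Δ_[1])^[k + i] f 0 * hchoose)

end FwdDiff

theorem cast_choose_succ_mul {R : Type*} [CommRing R] (a k : ℕ) :
    (a.choose (k + 1) : R) * (k + 1) = a.choose k * ((a : R) - k) := by
  rcases le_or_gt k a with hka | hak
  · have := congrArg (Nat.cast : ℕ → R) (Nat.choose_succ_right_eq a k)
    push_cast [Nat.cast_sub hka] at this
    exact this
  · simp [Nat.choose_eq_zero_of_lt hak, Nat.choose_eq_zero_of_lt (Nat.lt_succ_of_lt hak)]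

theorem sum_card_choose_eq_sum_powersetCard {α β : Type*} [Fintype α] [Fintype β]
    [DecidableEq β] (T : α → Finset β) (k : ℕ) :
    ∑ x, (#(T x)).choose k = ∑ S ∈ univ.powersetCard k, #{x | S ⊆ T x} := by
  have hT : ∀ x, (#(T x)).choose k = #{S ∈ univ.powersetCard k | S ⊆ T x} := fun x ↦ by
    rw [← card_powersetCard]
    congr 1
    ext S
    simp [mem_powersetCard, and_comm]
  simp only [hT, card_filter]
  exact sum_comm

theorem eq_zero_of_sum_choose_mul_eq_zero {d : ℕ → ℤ} {N : ℕ} (hd : ∀ j, N < j → d j = 0)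
    (h : ∀ k, ∑ j ∈ range (N + 1), (j.choose k : ℤ) * d j = 0) (m : ℕ) : d m = 0 := by
  suffices ∀ i m, N < m + i → d m = 0 from this (N + 1) m (by omega)
  intro i
  induction i with
  | zero => exact hd
  | succ i ih =>
    intro m hm
    rcases lt_or_ge N m with hNm | hmN
    · exact hd m hNm
    have hsum := h m
    rwa [sum_eq_single_of_mem m (mem_range.2 (by omega)), Nat.choose_self, Nat.cast_one,
      one_mul] at hsum
    intro j _ hjm
    rcases lt_or_gt_of_ne hjm with hj | hj
    · rw [Nat.choose_eq_zero_of_lt hj, Nat.cast_zero, zero_mul]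
    · rw [ih j (by omega), mul_zero]

theorem card_filter_eq_of_sum_choose_eq {α : Type*} [Fintype α] {g : α → ℕ} {N : ℕ}
    (hg : ∀ x, g x ≤ N) {b : ℕ → ℤ} (hb : ∀ j, N < j → b j = 0)
    (h : ∀ k, ∑ x, ((g x).choose k : ℤ) = ∑ j ∈ range (N + 1), (j.choose k : ℤ) * b j) (m : ℕ) :
    (#{x | g x = m} : ℤ) = b m := by
  have hfiber : ∀ k, ∑ x, ((g x).choose k : ℤ) =
      ∑ j ∈ range (N + 1), (j.choose k : ℤ) * #{x | g x = j} := fun k ↦ by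
    rw [← sum_fiberwise_of_maps_to (t := range (N + 1)) (g := g)
      (fun x _ ↦ mem_range.2 (Nat.lt_succ_of_le (hg x)))]
    refine sum_congr rfl fun j _ ↦ ?_
    rw [sum_congr rfl fun x hx ↦ by rw [(mem_filter.1 hx).2], sum_const, nsmul_eq_mul, mul_comm]
  have := eq_zero_of_sum_choose_mul_eq_zero (d := fun j ↦ (#{x | g x = j} : ℤ) - b j) (N := N)
    (fun j hj ↦ by
      rw [hb j hj, sub_zero, Nat.cast_eq_zero, card_eq_zero, filter_eq_empty_iff]
      exact fun x _ ↦ by have := hg x; omega)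
    (fun k ↦ by simp only [mul_sub, sum_sub_distrib, ← hfiber, ← h, sub_self]) m
  exact sub_eq_zero.1 this

def runStarts {n : ℕ} (f : Fin n → Fin n) : Finset (Fin n) :=
  {j | ∀ i, f i = j → j ≤ i}

theorem numRuns_eq_card_runStarts {n : ℕ} (f : Fin n → Fin n) :
    numRuns f = #(runStarts f) := rfl

theorem numRuns_le {n : ℕ} (f : Fin n → Fin n) : numRuns f ≤ n :=
  (card_le_univ _).trans_eq (Fintype.card_fin n)

theorem card_subset_runStarts {n : ℕ} (S : Finset (Fin n)) :
    #{f : Fin n → Fin n | S ⊆ runStarts f} = ∏ i, (n - #{j ∈ S | i < j}) := by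
  have hpi : ({f | S ⊆ runStarts f} : Finset (Fin n → Fin n)) =
      Fintype.piFinset fun i ↦ univ \ {j ∈ S | i < j} := by
    ext f
    simp only [runStarts, subset_iff, mem_filter, mem_univ, true_and, Fintype.mem_piFinset,
      mem_sdiff]
    constructor
    · rintro h i ⟨hS, hlt⟩
      exact (h hS i rfl).not_gt hlt
    · rintro h j hj i rfl
      exact le_of_not_gt fun hlt ↦ h i ⟨hj, hlt⟩
  rw [hpi, Fintype.card_piFinset]
  simp [card_univ_sdiff]

def upperCountSum (a N k : ℕ) : ℤ :=
  ∑ S ∈ univ.powersetCard k, ∏ i : Fin N, ((a : ℤ) - #{j ∈ S | i < j})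

theorem filter_lt_insert_zero {N : ℕ} (T : Finset (Fin (N + 1))) (i : Fin (N + 1)) :
    {j ∈ insert 0 T | i < j} = {j ∈ T | i < j} := by
  rw [filter_insert, if_neg (Fin.not_lt_zero i)]

theorem prod_sub_card_filter_lt_map_succ (a : ℤ) {N : ℕ} (S : Finset (Fin N)) :
    ∏ i : Fin (N + 1), (a - #{j ∈ S.map (Fin.succEmb N) | i < j}) =
      (a - #S) * ∏ i : Fin N, (a - #{j ∈ S | i < j}) := by
  rw [Fin.prod_univ_succ, filter_true_of_mem fun j hj ↦ ?_]
  · simp only [card_map, filter_map, Function.comp_def, Fin.coe_succEmb, Fin.succ_lt_succ_iff]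
  · obtain ⟨j, -, rfl⟩ := mem_map.1 hj
    exact Fin.succ_pos j

theorem upperCountSum_zero_left (a k : ℕ) : upperCountSum a 0 k = if k = 0 then 1 else 0 := by
  cases k <;> simp [upperCountSum]

theorem upperCountSum_zero_right (a N : ℕ) : upperCountSum a N 0 = (a : ℤ) ^ N := by
  simp [upperCountSum]

theorem upperCountSum_succ_succ (a N k : ℕ) :
    upperCountSum a (N + 1) (k + 1) =
      ((a : ℤ) - (k + 1)) * upperCountSum a N (k + 1) + ((a : ℤ) - k) * upperCountSum a N k := by
  have h0 : (0 : Fin (N + 1)) ∉ univ.map (Fin.succEmb N) := by simp [Fin.succ_ne_zero]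
  have huniv : (univ : Finset (Fin (N + 1))) = insert 0 (univ.map (Fin.succEmb N)) := by
    rw [Fin.univ_succ, cons_eq_insert]; rfl
  rw [upperCountSum]
  conv_lhs => enter [1]; rw [huniv, powersetCard_succ_insert h0]
  rw [sum_union, sum_image, powersetCard_map, powersetCard_map, sum_map, sum_map,
    upperCountSum, upperCountSum, mul_sum, mul_sum]
  · congr 1 <;> refine sum_congr rfl fun S hS ↦ ?_
    · simp only [RelEmbedding.coe_toEmbedding, mapEmbedding_apply]
      rw [prod_sub_card_filter_lt_map_succ, (mem_powersetCard.1 hS).2]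
      push_cast; ring
    · simp only [RelEmbedding.coe_toEmbedding, mapEmbedding_apply, filter_lt_insert_zero]
      rw [prod_sub_card_filter_lt_map_succ, (mem_powersetCard.1 hS).2]
  · intro S hS T hT hST
    have hS0 : (0 : Fin (N + 1)) ∉ S := fun h ↦ h0 ((mem_powersetCard.1 hS).1 h)
    have hT0 : (0 : Fin (N + 1)) ∉ T := fun h ↦ h0 ((mem_powersetCard.1 hT).1 h)
    simpa [erase_insert hS0, erase_insert hT0] using congrArg (erase · 0) hST
  · refine disjoint_left.2 fun S hS hS' ↦ ?_
    obtain ⟨T, -, rfl⟩ := mem_image.1 hS'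
    exact h0 ((mem_powersetCard.1 hS).1 (mem_insert_self 0 T))

theorem upperCountSum_eq_choose_mul_fwdDiff_iter (a N k : ℕ) :
    upperCountSum a N k = a.choose k * (Δ_[1])^[k] (fun x : ℤ ↦ x ^ N) (a - k) := by
  induction N generalizing k with
  | zero =>
    rcases k with _ | k
    · simp [upperCountSum_zero_left]
    · rw [upperCountSum_zero_left, fwdDiff_iter_pow_eq_zero_of_lt (Nat.succ_pos k)]
      simp
  | succ N ih =>
    rcases k with _ | k
    · simp [upperCountSum_zero_right]
    rw [upperCountSum_succ_succ, ih, ih]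
    simp_rw [pow_succ' _ N]
    rw [fwdDiff_iter_succ_id_mul, show (a : ℤ) - ↑(k + 1) + 1 = a - k by push_cast; ring]
    push_cast
    linear_combination -((Δ_[1])^[k] (fun x : ℤ ↦ x ^ N) (a - k) * cast_choose_succ_mul (R := ℤ) a k)

theorem sum_choose_numRuns (n k : ℕ) :
    ∑ f : Fin n → Fin n, ((numRuns f).choose k : ℤ) = upperCountSum n n k := by
  simp only [numRuns_eq_card_runStarts]
  rw [← Nat.cast_sum, sum_card_choose_eq_sum_powersetCard, Nat.cast_sum, upperCountSum]
  refine sum_congr rfl fun S _ ↦ ?_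
  rw [card_subset_runStarts, Nat.cast_prod]
  refine prod_congr rfl fun i _ ↦ ?_
  rw [Nat.cast_sub ((card_le_univ _).trans_eq (Fintype.card_fin n))]

theorem mappingRunCount_eq_choose_mul_fwdDiff_iter (n m : ℕ) :
    (mappingRunCount n m : ℤ) = n.choose m * (Δ_[1])^[m] (fun x : ℤ ↦ x ^ n) 0 := by
  rw [mappingRunCount, Nat.card_eq_fintype_card, Fintype.card_subtype]
  refine card_filter_eq_of_sum_choose_eq numRuns_le
    (b := fun j ↦ n.choose j * (Δ_[1])^[j] (fun x : ℤ ↦ x ^ n) 0)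
    (fun j hj ↦ by rw [Nat.choose_eq_zero_of_lt hj, Nat.cast_zero, zero_mul]) (fun k ↦ ?_) m
  rw [sum_choose_numRuns, upperCountSum_eq_choose_mul_fwdDiff_iter, choose_mul_fwdDiff_iter_sub]

theorem mappingRunCount_explicit_general (n m : ℕ) (hn : 1 ≤ n) :
    (mappingRunCount n m : ℤ) =
      (n : ℤ) * (Nat.choose (n - 1) (m - 1) : ℤ) *
        ∑ ℓ ∈ Finset.range m,
          (-1 : ℤ) ^ (m - 1 - ℓ) * (Nat.choose (m - 1) ℓ : ℤ) * ((ℓ : ℤ) + 1) ^ (n - 1) := by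
  obtain ⟨n, rfl⟩ : ∃ n', n = n' + 1 := ⟨n - 1, by omega⟩
  rw [mappingRunCount_eq_choose_mul_fwdDiff_iter]
  rcases m with _ | m
  · simp
  simp_rw [pow_succ' _ n]
  rw [fwdDiff_iter_succ_id_mul, zero_mul, zero_add, zero_add, fwdDiff_iter_eq_sum_shift]
  have hchoose : ((n + 1).choose (m + 1) : ℤ) * (m + 1) = (n + 1) * n.choose m := by
    exact_mod_cast (Nat.add_one_mul_choose_eq n m).symm
  simp only [Nat.add_sub_cancel, smul_eq_mul, nsmul_eq_mul, mul_one, add_comm (1 : ℤ)]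
  push_cast
  linear_combination
    (∑ ℓ ∈ range (m + 1), (-1 : ℤ) ^ (m - ℓ) * m.choose ℓ * ((ℓ : ℤ) + 1) ^ n) * hchoose

/-- Explicit alternating-sum formula for the number of `n`-mappings with exactly
`m` ascending runs. -/
theorem mappingRunCount_explicit (n m : ℕ) (hn : 1 ≤ n) (hm : 1 ≤ m) :
    (mappingRunCount n m : ℤ) =
      (n : ℤ) * (Nat.choose (n - 1) (m - 1) : ℤ) *
        ∑ ℓ ∈ Finset.range m,
          (-1 : ℤ) ^ (m - 1 - ℓ) * (Nat.choose (m - 1) ℓ : ℤ) * ((ℓ : ℤ) + 1) ^ (n - 1) :=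
  mappingRunCount_explicit_general n m hn
end

section
/- There exists a constant C > 0 such that for all n ≥ 1, the variance of the number of ascending runs of a uniformly random function f : Fin n → Fin n satisfies | V_n − (e^{−1} − 2e^{−2})·n | ≤ C, where V_n = n^{−n} · Σ_{f : Fin n → Fin n} runs(f)² − E_n² and E_n = n^{−n} · Σ_{f : Fin n → Fin n} runs(f). In other words, V(R_n) = (e^{−1} − 2e^{−2})·n + O(1). -/
/-- The mean number of ascending runs of a uniformly random `n`-mapping. -/
noncomputable def meanRuns (n : ℕ) : ℝ :=
  (∑ f : Fin n → Fin n, (numRuns f : ℝ)) / (n : ℝ) ^ n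

/-- The variance of the number of ascending runs of a uniformly random `n`-mapping. -/
noncomputable def varRuns (n : ℕ) : ℝ :=
  (∑ f : Fin n → Fin n, (numRuns f : ℝ) ^ 2) / (n : ℝ) ^ n - (meanRuns n) ^ 2

open Finset Real

theorem sum_sum_eq_sum_diag_add_sum_lt {ι M : Type*} [Fintype ι] [LinearOrder ι]
    [AddCommMonoid M] (F : ι → ι → M) :
    ∑ j, ∑ k, F j k = ∑ j, F j j + ∑ j, ∑ k, if j < k then F j k + F k j else 0 := by
  have split : ∀ j k, F j k =
      (if j = k then F j k else 0) + (if j < k then F j k else 0) + if k < j then F j k else 0 := by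
    intro j k
    rcases lt_trichotomy j k with h | rfl | h
    · simp [h, h.ne, h.not_gt]
    · simp
    · simp [h, h.ne', h.not_gt]
  rw [sum_congr rfl fun j _ => sum_congr rfl fun k _ => split j k]
  simp only [sum_add_distrib, sum_ite_eq, mem_univ, if_true]
  rw [sum_comm (f := fun j k => if k < j then F j k else 0)]
  simp only [add_assoc, ← sum_add_distrib, ← ite_add_zero]

theorem prod_range_ite_lt {M : Type*} [CommMonoid M] {j n : ℕ} (h : j ≤ n) (c d : M) :
    ∏ i ∈ range n, (if i < j then c else d) = c ^ j * d ^ (n - j) := by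
  rw [← prod_range_mul_prod_Ico _ h,
    prod_congr rfl fun i hi => if_pos (mem_range.1 hi),
    prod_congr rfl fun i hi => if_neg (not_lt.2 (mem_Ico.1 hi).1),
    prod_const, prod_const, card_range, Nat.card_Ico]

theorem prod_range_ite_lt_ite_lt {M : Type*} [CommMonoid M] {j k n : ℕ} (hjk : j ≤ k)
    (hk : k ≤ n) (c d e : M) :
    ∏ i ∈ range n, (if i < j then c else if i < k then d else e)
      = c ^ j * d ^ (k - j) * e ^ (n - k) := by
  have below : ∏ i ∈ range k, (if i < j then c else if i < k then d else e)
      = ∏ i ∈ range k, (if i < j then c else d) :=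
    prod_congr rfl fun i hi => by rw [if_pos (mem_range.1 hi)]
  have above : ∏ i ∈ Ico k n, (if i < j then c else if i < k then d else e) = e ^ (n - k) := by
    rw [prod_congr rfl fun i hi => by
      rw [if_neg (not_lt.2 (hjk.trans (mem_Ico.1 hi).1)), if_neg (not_lt.2 (mem_Ico.1 hi).1)],
      prod_const, Nat.card_Ico]
  rw [← prod_range_mul_prod_Ico _ hk, below, above, prod_range_ite_lt hjk]

theorem sub_mul_sum_pow_mul_pow_sub {R : Type*} [CommRing R] (a b : R) (k : ℕ) :
    (a - b) * ∑ j ∈ range k, b ^ j * a ^ (k - j) = a * (a ^ k - b ^ k) := by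
  induction k with
  | zero => simp
  | succ k ih =>
    have shift : ∑ j ∈ range k, b ^ j * a ^ (k + 1 - j)
        = a * ∑ j ∈ range k, b ^ j * a ^ (k - j) := by
      rw [mul_sum]
      refine sum_congr rfl fun j hj => ?_
      rw [Nat.sub_add_comm (mem_range.1 hj).le, pow_succ]
      ring
    rw [sum_range_succ, shift, Nat.add_sub_cancel_left, pow_one]
    linear_combination a * ih

section PowBounds
variable {R : Type*} [CommRing R] [LinearOrder R] [IsStrictOrderedRing R] {x y : R}

theorem pow_sub_pow_le_mul (hy : 0 ≤ y) (hyx : y ≤ x) (m : ℕ) :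
    x ^ m - y ^ m ≤ m * x ^ (m - 1) * (x - y) := by
  have := sub_nonneg.2 hyx
  have := hy.trans hyx
  rw [← geom_sum₂_mul, ← geom_sum₂_self]
  gcongr

theorem mul_le_pow_sub_pow (hy : 0 ≤ y) (hyx : y ≤ x) (m : ℕ) :
    m * y ^ (m - 1) * (x - y) ≤ x ^ m - y ^ m := by
  have := sub_nonneg.2 hyx
  rw [← geom_sum₂_mul, ← geom_sum₂_self]
  gcongr

end PowBounds

theorem abs_mul_one_sub_div_pow_sub_exp_neg_le {n : ℕ} {t : ℝ} (ht : 0 ≤ t) (htn : t ≤ n) :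
    |n * ((1 - t / n) ^ n - exp (-t))| ≤ t ^ 2 := by
  obtain rfl | hn := n.eq_zero_or_pos
  · simpa using sq_nonneg t
  have hn' : (0 : ℝ) < n := Nat.cast_pos.2 hn
  set x := t / n
  have hx0 : 0 ≤ x := div_nonneg ht hn'.le
  have hx1 : x ≤ 1 := (div_le_one hn').2 htn
  have hexp : exp (-t) = exp (-x) ^ n := by
    rw [← exp_nat_mul]; congr 1; simp only [x]; field_simp
  have hmax : max |1 - x| |exp (-x)| ≤ 1 := by
    rw [abs_of_nonneg (sub_nonneg.2 hx1), abs_of_pos (exp_pos _)]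
    exact max_le (by linarith) (exp_le_one_iff.2 (by linarith))
  have hlin : |1 - x - exp (-x)| ≤ x ^ 2 := by
    have := abs_exp_sub_one_sub_id_le (x := -x) (by rw [abs_neg, abs_of_nonneg hx0]; exact hx1)
    rw [show 1 - x - exp (-x) = -(exp (-x) - 1 - -x) by ring, abs_neg, ← neg_sq]
    exact this
  calc |n * ((1 - x) ^ n - exp (-t))|
      = n * |(1 - x) ^ n - exp (-x) ^ n| := by rw [abs_mul, Nat.abs_cast, hexp]
    _ ≤ n * (|1 - x - exp (-x)| * n * max |1 - x| |exp (-x)| ^ (n - 1)) := by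
        gcongr; exact abs_pow_sub_pow_le ..
    _ ≤ n * (x ^ 2 * n * 1) := by
        gcongr; exact pow_le_one₀ (le_max_of_le_left (abs_nonneg _)) hmax
    _ = t ^ 2 := by simp only [x]; field_simp

theorem sum_fin_sum_fin_ite_lt {n : ℕ} {M : Type*} [AddCommMonoid M] (g : ℕ → ℕ → M) :
    ∑ j : Fin n, ∑ k : Fin n, (if j < k then g j k else 0)
      = ∑ k ∈ range n, ∑ j ∈ range k, g j k := by
  rw [sum_comm]
  simp only [Fin.lt_def]
  rw [Fin.sum_univ_eq_sum_range (fun k => ∑ j : Fin n, if (j : ℕ) < k then g j k else 0)]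
  refine sum_congr rfl fun k hk => ?_
  rw [Fin.sum_univ_eq_sum_range (fun j => if j < k then g j k else 0), ← sum_filter]
  congr 1
  ext j
  simp only [mem_filter, mem_range] at hk ⊢
  omega

section Counting

variable {n : ℕ}

def mapsWithRunStarts (T : Finset (Fin n)) : Finset (Fin n → Fin n) :=
  {f | ∀ j ∈ T, ∀ i, f i = j → j ≤ i}

theorem card_mapsWithRunStarts (T : Finset (Fin n)) :
    #(mapsWithRunStarts T) = ∏ i, (n - #{x ∈ T | i < x}) := by
  have hmaps : mapsWithRunStarts T = Fintype.piFinset fun i => univ \ {x ∈ T | i < x} := by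
    ext f
    simp only [mapsWithRunStarts, mem_filter, mem_univ, true_and, Fintype.mem_piFinset,
      mem_sdiff, not_and, not_lt]
    exact ⟨fun h i hi => h _ hi i rfl, fun h j hj i hij => hij ▸ h i (hij ▸ hj)⟩
  rw [hmaps, Fintype.card_piFinset]
  simp only [card_sdiff_of_subset (subset_univ _), card_univ, Fintype.card_fin]

theorem card_mapsWithRunStarts_div (T : Finset (Fin n)) :
    (#(mapsWithRunStarts T) : ℝ) / (n : ℝ) ^ n = ∏ i : Fin n, (1 - #{x ∈ T | i < x} / (n : ℝ)) := by
  rw [card_mapsWithRunStarts, Nat.cast_prod, ← Fin.prod_const n (n : ℝ), ← prod_div_distrib]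
  refine prod_congr rfl fun i _ => ?_
  have hn : (n : ℝ) ≠ 0 := Nat.cast_ne_zero.2 i.pos.ne'
  have hle : #{x ∈ T | i < x} ≤ n := (card_filter_le _ _).trans (card_le_univ T) |>.trans_eq
    (Fintype.card_fin n)
  rw [Nat.cast_sub hle, sub_div, div_self hn]

theorem sum_numRuns :
    ∑ f : Fin n → Fin n, (numRuns f : ℝ) = ∑ j : Fin n, (#(mapsWithRunStarts {j}) : ℝ) := by
  simp only [numRuns, mapsWithRunStarts, natCast_card_filter, mem_singleton, forall_eq]
  exact sum_comm

theorem sum_numRuns_sq :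
    ∑ f : Fin n → Fin n, (numRuns f : ℝ) ^ 2
      = ∑ j : Fin n, ∑ k : Fin n, (#(mapsWithRunStarts {j, k}) : ℝ) := by
  simp only [numRuns, mapsWithRunStarts, natCast_card_filter, sq, sum_mul_sum,
    ite_zero_mul_ite_zero, mem_insert, mem_singleton, forall_eq_or_imp, forall_eq, mul_one]
  rw [sum_comm]
  exact sum_congr rfl fun j _ => sum_comm

theorem card_mapsWithRunStarts_singleton_div (j : Fin n) :
    (#(mapsWithRunStarts {j}) : ℝ) / (n : ℝ) ^ n = (1 - 1 / n) ^ (j : ℕ) := by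
  have factor : ∀ i : Fin n,
      1 - (#{x ∈ {j} | i < x} : ℝ) / n = if i < j then 1 - 1 / (n : ℝ) else 1 := by
    intro i
    rw [filter_singleton]
    split_ifs <;> simp
  simp only [card_mapsWithRunStarts_div, factor]
  simp only [Fin.lt_def]
  rw [Fin.prod_univ_eq_prod_range (fun i => if i < (j : ℕ) then 1 - 1 / (n : ℝ) else 1) n,
    prod_range_ite_lt j.isLt.le, one_pow, mul_one]

theorem card_mapsWithRunStarts_pair_div {j k : Fin n} (hjk : j < k) :
    (#(mapsWithRunStarts {j, k}) : ℝ) / (n : ℝ) ^ n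
      = (1 - 2 / n) ^ (j : ℕ) * (1 - 1 / n) ^ (k - j : ℕ) := by
  have factor : ∀ i : Fin n, 1 - (#{x ∈ {j, k} | i < x} : ℝ) / n =
      if i < j then 1 - 2 / (n : ℝ) else if i < k then 1 - 1 / (n : ℝ) else 1 := by
    intro i
    rw [filter_insert, filter_singleton]
    split_ifs <;> simp_all [hjk.ne]
    order
  simp only [card_mapsWithRunStarts_div, factor]
  simp only [Fin.lt_def]
  rw [Fin.prod_univ_eq_prod_range
      (fun i => if i < (j : ℕ) then 1 - 2 / (n : ℝ) else if i < (k : ℕ) then 1 - 1 / n else 1) n,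
    prod_range_ite_lt_ite_lt (Fin.le_iff_val_le_val.1 hjk.le) k.isLt.le, one_pow, mul_one]

end Counting

theorem meanRuns_eq (n : ℕ) : meanRuns n = ∑ j ∈ range n, (1 - 1 / (n : ℝ)) ^ j := by
  rw [meanRuns, sum_numRuns, sum_div]
  simp only [card_mapsWithRunStarts_singleton_div]
  exact Fin.sum_univ_eq_sum_range (fun j => (1 - 1 / (n : ℝ)) ^ j) n

theorem sum_numRuns_sq_div (n : ℕ) :
    (∑ f : Fin n → Fin n, (numRuns f : ℝ) ^ 2) / (n : ℝ) ^ n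
      = meanRuns n
        + 2 * ∑ k ∈ range n, ∑ j ∈ range k, (1 - 2 / (n : ℝ)) ^ j * (1 - 1 / n) ^ (k - j) := by
  have offDiag : ∀ j k : Fin n,
      (if j < k then (#(mapsWithRunStarts {j, k}) : ℝ) / (n : ℝ) ^ n
        + (#(mapsWithRunStarts {k, j}) : ℝ) / (n : ℝ) ^ n else 0)
      = if j < k then 2 * ((1 - 2 / (n : ℝ)) ^ (j : ℕ) * (1 - 1 / n) ^ (k - j : ℕ)) else 0 := by
    intro j k
    split_ifs with h
    · rw [pair_comm k j, card_mapsWithRunStarts_pair_div h, two_mul]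
    · rfl
  rw [sum_numRuns_sq, sum_div]
  simp only [sum_div]
  rw [sum_sum_eq_sum_diag_add_sum_lt]
  simp only [offDiag, pair_eq_singleton, ← sum_div, ← sum_numRuns]
  rw [sum_fin_sum_fin_ite_lt (fun j k => 2 * ((1 - 2 / (n : ℝ)) ^ j * (1 - 1 / n) ^ (k - j)))]
  simp only [← mul_sum, meanRuns]

theorem varRuns_eq {n : ℕ} (hn : 0 < n) :
    varRuns n
      = n * (1 - 1 / n) ^ n + n ^ 2 * ((1 - 1 / n) * (1 - 2 / n) ^ n - (1 - 1 / n) ^ (2 * n)) := by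
  have hn' : (n : ℝ) ≠ 0 := Nat.cast_ne_zero.2 hn.ne'
  rw [varRuns, sum_numRuns_sq_div, meanRuns_eq]
  set a : ℝ := 1 - 1 / n
  set b : ℝ := 1 - 2 / n
  have hscale : ∀ {c : ℝ} {S T : ℝ}, c * n = 1 → c * S = T → S = n * T := fun hc hS => by
    rw [← hS, ← mul_assoc, mul_comm (n : ℝ), hc, one_mul]
  have geom_a : ∑ j ∈ range n, a ^ j = n * (1 - a ^ n) :=
    hscale (by simp only [a]; field_simp; ring) (mul_neg_geom_sum a n)
  have geom_b : ∑ j ∈ range n, b ^ j = n * ((1 - b ^ n) / 2) :=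
    hscale (c := (1 - b) / 2) (by simp only [b]; field_simp; ring)
      (by rw [div_mul_eq_mul_div, mul_neg_geom_sum])
  have inner : ∀ k, ∑ j ∈ range k, b ^ j * a ^ (k - j) = n * (a * (a ^ k - b ^ k)) := fun k =>
    hscale (by simp only [a, b]; field_simp; ring) (sub_mul_sum_pow_mul_pow_sub a b k)
  simp only [inner]
  rw [← mul_sum, ← mul_sum, sum_sub_distrib, geom_a, geom_b, pow_mul']
  simp only [a, b]
  field_simp
  ring

theorem abs_mul_one_sub_one_div_pow_sub_exp_le {n : ℕ} (hn : 1 ≤ n) :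
    |n * ((1 - 1 / n) ^ n - exp (-1))| ≤ 1 :=
  (abs_mul_one_sub_div_pow_sub_exp_neg_le zero_le_one (by exact_mod_cast hn)).trans_eq (one_pow 2)

theorem abs_mul_one_sub_two_div_pow_sub_exp_le {n : ℕ} (hn : 2 ≤ n) :
    |n * ((1 - 2 / n) ^ n - exp (-2))| ≤ 4 :=
  (abs_mul_one_sub_div_pow_sub_exp_neg_le zero_le_two (by exact_mod_cast hn)).trans_eq (by norm_num)

theorem sq_mul_pow_sub_pow_bounds {n : ℕ} (hn : 2 ≤ n) :
    n * (1 - 2 / n) ^ (n - 1) ≤ (n : ℝ) ^ 2 * (((1 - 1 / n) ^ 2) ^ n - (1 - 2 / n) ^ n) ∧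
      (n : ℝ) ^ 2 * (((1 - 1 / n) ^ 2) ^ n - (1 - 2 / n) ^ n)
        ≤ n * ((1 - 1 / n) ^ 2) ^ (n - 1) := by
  have hn' : (2 : ℝ) ≤ n := by exact_mod_cast hn
  set a : ℝ := 1 - 1 / n
  set b : ℝ := 1 - 2 / n
  have hb0 : 0 ≤ b := sub_nonneg.2 ((div_le_one (by linarith)).2 hn')
  have hgap : (n : ℝ) ^ 2 * (a ^ 2 - b) = 1 := by simp only [a, b]; field_simp; ring
  have hba : b ≤ a ^ 2 := by nlinarith
  constructor
  · calc _ = (n : ℝ) ^ 2 * (n * b ^ (n - 1) * (a ^ 2 - b)) := by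
          linear_combination (-(n * b ^ (n - 1))) * hgap
      _ ≤ _ := by gcongr; exact mul_le_pow_sub_pow hb0 hba n
  · calc _ ≤ (n : ℝ) ^ 2 * (n * (a ^ 2) ^ (n - 1) * (a ^ 2 - b)) := by
          gcongr; exact pow_sub_pow_le_mul hb0 hba n
      _ = _ := by linear_combination (n * (a ^ 2) ^ (n - 1)) * hgap

theorem abs_sq_mul_pow_sub_pow_sub_exp_le {n : ℕ} (hn : 2 ≤ n) :
    |(n : ℝ) ^ 2 * ((1 - 1 / n) ^ (2 * n) - (1 - 2 / n) ^ n) - n * exp (-2)| ≤ 4 := by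
  have hn' : (2 : ℝ) ≤ n := by exact_mod_cast hn
  have hmean := abs_mul_one_sub_one_div_pow_sub_exp_le (by omega : 1 ≤ n)
  have hb := abs_le.1 (abs_mul_one_sub_two_div_pow_sub_exp_le hn)
  obtain ⟨lower, upper⟩ := sq_mul_pow_sub_pow_bounds hn
  set a : ℝ := 1 - 1 / n
  set b : ℝ := 1 - 2 / n
  have ha0 : 0 ≤ a := sub_nonneg.2 ((div_le_one (by linarith)).2 (by linarith))
  have ha1 : a ≤ 1 := sub_le_self 1 (by positivity)
  have hb0 : 0 ≤ b := sub_nonneg.2 ((div_le_one (by linarith)).2 hn')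
  have hb1 : b ≤ 1 := sub_le_self 1 (by positivity)
  -- `n (a²)ⁿ⁻¹` exceeds `n (a²)ⁿ` by `(a²)ⁿ⁻¹ (1 + a) ≤ 2`
  have shift : n * (a ^ 2) ^ (n - 1) ≤ n * (a ^ 2) ^ n + 2 := by
    have hsq : (n : ℝ) * (1 - a ^ 2) = 1 + a := by simp only [a]; field_simp; ring
    have hpow : (a ^ 2) ^ (n - 1) ≤ 1 := pow_le_one₀ (sq_nonneg a) (pow_le_one₀ ha0 ha1)
    rw [← pow_sub_one_mul (by omega : n ≠ 0) (a ^ 2)]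
    nlinarith [pow_nonneg (sq_nonneg a) (n - 1)]
  have hsq_mean : n * ((a ^ 2) ^ n - exp (-2)) ≤ 2 := by
    have he : exp (-2) = exp (-1) ^ 2 := by rw [← exp_nat_mul]; norm_num
    have hsum : a ^ n + exp (-1) ≤ 2 :=
      (add_le_add (pow_le_one₀ ha0 ha1) (exp_le_one_iff.2 (by norm_num))).trans_eq
        one_add_one_eq_two
    calc (n : ℝ) * ((a ^ 2) ^ n - exp (-2)) = n * (a ^ n - exp (-1)) * (a ^ n + exp (-1)) := by
          rw [he, ← pow_mul, mul_comm 2 n, pow_mul]; ring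
      _ ≤ 1 * 2 := by gcongr; exact le_of_abs_le hmean
      _ = 2 := one_mul 2
  have hbn : b ^ n ≤ b ^ (n - 1) := pow_le_pow_of_le_one hb0 hb1 (Nat.sub_le n 1)
  rw [pow_mul, abs_le]
  constructor
  · linarith [mul_le_mul_of_nonneg_left hbn (Nat.cast_nonneg (α := ℝ) n)]
  · linarith

theorem abs_varRuns_sub_le {n : ℕ} (hn : 2 ≤ n) :
    |varRuns n - (exp (-1) - 2 * exp (-2)) * n| ≤ 9 := by
  have hmean := abs_le.1 (abs_mul_one_sub_one_div_pow_sub_exp_le (by omega : 1 ≤ n))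
  have hb := abs_le.1 (abs_mul_one_sub_two_div_pow_sub_exp_le hn)
  have hD := abs_le.1 (abs_sq_mul_pow_sub_pow_sub_exp_le hn)
  have decomp : varRuns n - (exp (-1) - 2 * exp (-2)) * n
      = n * ((1 - 1 / n) ^ n - exp (-1)) - n * ((1 - 2 / n) ^ n - exp (-2))
        - ((n : ℝ) ^ 2 * ((1 - 1 / n) ^ (2 * n) - (1 - 2 / n) ^ n) - n * exp (-2)) := by
    rw [varRuns_eq (by omega)]
    field_simp
    ring
  rw [decomp, abs_le]
  constructor <;> linarith

/-- The variance of the number of ascending runs of a random `n`-mapping is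
`(e⁻¹ - 2e⁻²)·n + O(1)`. -/
theorem varRuns_asymptotic :
    ∃ C : ℝ, 0 < C ∧ ∀ n : ℕ, 1 ≤ n →
      |varRuns n - (Real.exp (-1) - 2 * Real.exp (-2)) * n| ≤ C := by
  refine ⟨9, by norm_num, fun n hn => ?_⟩
  obtain rfl | hn := hn.eq_or_lt
  · have h₁ : exp (-1) ≤ 1 := exp_le_one_iff.2 (by norm_num)
    have h₂ : exp (-2) ≤ 1 := exp_le_one_iff.2 (by norm_num)
    rw [varRuns_eq one_pos, abs_le]
    norm_num
    constructor <;> linarith [exp_pos (-1), exp_pos (-2)]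
  · exact abs_varRuns_sub_le hn
end
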